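/- For all δ ∈ (0,1) and integers k ≥ 3, q_{k+1} > q_k, where q_k = s_{k-1} - s_k and s_j = (j+1/2)^δ - 2(j-1/2)^δ + (j-3/2)^δ for j ≥ 2. That is, the sequence (q_k)_{k≥3} is strictly increasing. -/

import Mathlib

/-
`q (k+1) - q k` is minus the central second difference of `g δ` at `k`, so it suffices that
`g δ` is strictly concave on `[2, ∞)`. But `g δ` is itself a second difference of `t ↦ t ^ δ`
(shifted by `1/2`), so its second derivative is the second difference of
`t ↦ δ (δ - 1) t ^ (δ - 2)`, which is negative because `t ↦ t ^ (δ - 2)` is strictly convex.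
-/

noncomputable def g (δ : ℝ) (x : ℝ) : ℝ :=
  (x + 1/2) ^ δ - 2 * (x - 1/2) ^ δ + (x - 3/2) ^ δ

noncomputable def q (δ : ℝ) (k : ℕ) : ℝ := g δ ((k : ℝ) - 1) - g δ (k : ℝ)

open Set

def secondDiff (φ : ℝ → ℝ) (x : ℝ) : ℝ := φ (x - 1) - 2 * φ x + φ (x + 1)

theorem StrictConvexOn.secondDiff_pos {s : Set ℝ} {φ : ℝ → ℝ} (hφ : StrictConvexOn ℝ s φ)
    {x : ℝ} (hl : x - 1 ∈ s) (hr : x + 1 ∈ s) : 0 < secondDiff φ x := by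
  have half : (0 : ℝ) < 1 / 2 := by norm_num
  have h := hφ.2 hl hr (by linarith) half half (by norm_num)
  have hmid : (1 / 2 : ℝ) • (x - 1) + (1 / 2 : ℝ) • (x + 1) = x := by simp only [smul_eq_mul]; ring
  rw [hmid, smul_eq_mul, smul_eq_mul] at h
  unfold secondDiff
  linarith

theorem StrictConcaveOn.secondDiff_neg {s : Set ℝ} {φ : ℝ → ℝ} (hφ : StrictConcaveOn ℝ s φ)
    {x : ℝ} (hl : x - 1 ∈ s) (hr : x + 1 ∈ s) : secondDiff φ x < 0 := by
  have := hφ.neg.secondDiff_pos hl hr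
  simp only [secondDiff, Pi.neg_apply] at this
  unfold secondDiff
  linarith

theorem iteratedDeriv_secondDiff {φ : ℝ → ℝ} {n : ℕ} {x : ℝ}
    (hl : ContDiffAt ℝ n φ (x - 1)) (hc : ContDiffAt ℝ n φ x) (hr : ContDiffAt ℝ n φ (x + 1)) :
    iteratedDeriv n (secondDiff φ) x = secondDiff (iteratedDeriv n φ) x := by
  have hl' : ContDiffAt ℝ n (fun y => φ (y - 1)) x :=
    hl.comp x (contDiffAt_id.sub contDiffAt_const)
  have hr' : ContDiffAt ℝ n (fun y => φ (y + 1)) x :=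
    hr.comp x (contDiffAt_id.add contDiffAt_const)
  have hc' : ContDiffAt ℝ n (fun y => 2 * φ y) x := contDiffAt_const.mul hc
  unfold secondDiff
  rw [iteratedDeriv_fun_add (hl'.sub hc') hr', iteratedDeriv_fun_sub hl' hc',
    iteratedDeriv_const_mul_field, iteratedDeriv_comp_sub_const, iteratedDeriv_comp_add_const]

theorem iteratedDeriv_two_rpow_const (p x : ℝ) :
    iteratedDeriv 2 (fun t : ℝ => t ^ p) x = p * (p - 1) * x ^ (p - 2) := by
  rw [iteratedDeriv_eq_iterate, Real.iter_deriv_rpow_const]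
  simp [descPochhammer_succ_right]

theorem strictConvexOn_rpow_of_neg {p : ℝ} (hp : p < 0) :
    StrictConvexOn ℝ (Ioi 0) fun x : ℝ => x ^ p := by
  refine strictConvexOn_of_deriv2_pos (convex_Ioi 0)
    (fun x hx => (Real.continuousAt_rpow_const x p (Or.inl hx.ne')).continuousWithinAt)
    fun x hx => ?_
  rw [interior_Ioi] at hx
  rw [← iteratedDeriv_eq_iterate, iteratedDeriv_two_rpow_const]
  have : 0 < x ^ (p - 2) := Real.rpow_pos_of_pos hx _
  have : 0 < p * (p - 1) := by nlinarith
  positivity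

theorem g_eq_secondDiff (δ : ℝ) : g δ = fun x => secondDiff (· ^ δ) (x - 1/2) := by
  ext x
  simp only [g, secondDiff]
  ring_nf

theorem q_succ_sub_q (δ : ℝ) (k : ℕ) : q δ (k + 1) - q δ k = -secondDiff (g δ) k := by
  simp only [q, secondDiff]
  push_cast
  ring_nf

theorem strictConcaveOn_g {δ : ℝ} (h0 : 0 < δ) (h1 : δ < 1) :
    StrictConcaveOn ℝ (Ici 2) (g δ) := by
  have hcont : Continuous (g δ) := by
    have := Real.continuous_rpow_const h0.le
    unfold g; fun_prop
  refine strictConcaveOn_of_deriv2_neg (convex_Ici 2) hcont.continuousOn fun x hx => ?_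
  rw [interior_Ici] at hx
  have hx : 2 < x := hx
  have hsmooth : ∀ y : ℝ, 0 < y → ContDiffAt ℝ 2 (· ^ δ) y :=
    fun y hy => Real.contDiffAt_rpow_const_of_ne hy.ne'
  rw [← iteratedDeriv_eq_iterate, g_eq_secondDiff, iteratedDeriv_comp_sub_const]
  beta_reduce
  rw [iteratedDeriv_secondDiff (hsmooth _ (by linarith)) (hsmooth _ (by linarith))
      (hsmooth _ (by linarith))]
  have hconv := (strictConvexOn_rpow_of_neg (p := δ - 2) (by linarith)).secondDiff_pos
    (x := x - 1/2) (show (0:ℝ) < x - 1/2 - 1 by linarith) (show (0:ℝ) < x - 1/2 + 1 by linarith)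
  simp only [secondDiff, iteratedDeriv_two_rpow_const] at hconv ⊢
  nlinarith [mul_neg_of_pos_of_neg h0 (sub_neg.mpr h1)]

theorem stmt_8 (δ : ℝ) (h0 : 0 < δ) (h1 : δ < 1) (k : ℕ) (hk : 3 ≤ k) :
    q δ k < q δ (k + 1) := by
  have hk' : (3 : ℝ) ≤ k := by exact_mod_cast hk
  have := (strictConcaveOn_g h0 h1).secondDiff_neg (x := k)
    (show (2 : ℝ) ≤ k - 1 by linarith) (show (2 : ℝ) ≤ k + 1 by linarith)
  linarith [q_succ_sub_q δ k]
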